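/- Let $H = \{x : x\cdot u \ge 0\}$ be a half space with reflection $R$ with respect to $\partial H$, and let $k$ be an increasing function on $[-1,1]$. For $x, y \in H \cap S^n$ and real-valued functions $f, g$ on $S^n$, one has $k(x\cdot y)(f(x)g(y) + f(Rx)g(Ry)) + k(Rx\cdot y)(f(Rx)g(y) + f(x)g(Ry)) \le k(x\cdot y)(f_H(x)g_H(y) + f_H(Rx)g_H(Ry)) + k(Rx\cdot y)(f_H(Rx)g_H(y) + f_H(x)g_H(Ry))$, with equality failing (strict inequality) if $k$ is strictly increasing, $x\cdot u > 0$, $y \cdot u > 0$, $f(x) > f(Rx)$, and $g(y) < g(Ry)$. -/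

import Mathlib

/-!
Since `Rx·y = x·y - 2 (x·u)(u·y)`, points of `H` satisfy `Rx·y ≤ x·y`, so `k(Rx·y) ≤ k(x·y)`.
Writing `c = k(x·y)`, `d = k(Rx·y)`, the left-hand side equals
`d (a + a') (b + b') + (c - d) (a b + a' b')` with `a = f x`, `a' = f (Rx)`, `b = g y`,
`b' = g (Ry)`. On `H` the rearrangement replaces `(a, a')` and `(b, b')` by their (max, min)
pairs, which keeps the sums `a + a'`, `b + b'` and can only increase `a b + a' b'`.
-/

open Metric Set
open scoped RealInnerProductSpace

noncomputable section

variable {n : ℕ}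

/-- Reflection with respect to the hyperplane `u^⊥`. -/
def reflHyp (u x : EuclideanSpace ℝ (Fin (n + 1))) : EuclideanSpace ℝ (Fin (n + 1)) :=
  x - (2 * ⟪x, u⟫) • u

/-- Two-point rearrangement of `f` with respect to the half space `H = {x : x·u ≥ 0}`. -/
def twoPtRearr (u : EuclideanSpace ℝ (Fin (n + 1)))
    (f : EuclideanSpace ℝ (Fin (n + 1)) → ℝ) (x : EuclideanSpace ℝ (Fin (n + 1))) : ℝ :=
  if 0 ≤ ⟪x, u⟫ then max (f x) (f (reflHyp u x)) else min (f x) (f (reflHyp u x))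

section TwoPointRearrangement

variable {α : Type*} [CommRing α]

theorem two_point_sum_eq (c d a a' b b' : α) :
    c * (a * b + a' * b') + d * (a' * b + a * b') =
      d * ((a + a') * (b + b')) + (c - d) * (a * b + a' * b') := by
  ring

variable [LinearOrder α] [IsStrictOrderedRing α]

theorem mul_add_mul_le_max_mul_max_add_min_mul_min (a a' b b' : α) :
    a * b + a' * b' ≤ max a a' * max b b' + min a a' * min b b' := by
  rcases le_total a' a with ha | ha <;> rcases le_total b' b with hb | hb <;>
    simp only [max_eq_left, max_eq_right, min_eq_left, min_eq_right, ha, hb] <;>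
    nlinarith [mul_nonneg (sub_nonneg.2 ha) (sub_nonneg.2 hb)]

theorem mul_add_mul_lt_max_mul_max_add_min_mul_min {a a' b b' : α} (ha : a' < a) (hb : b < b') :
    a * b + a' * b' < max a a' * max b b' + min a a' * min b b' := by
  rw [max_eq_left ha.le, min_eq_right ha.le, max_eq_right hb.le, min_eq_left hb.le]
  nlinarith [mul_pos (sub_pos.2 ha) (sub_pos.2 hb)]

theorem two_point_sum_le_max_min {c d : α} (hdc : d ≤ c) (a a' b b' : α) :
    c * (a * b + a' * b') + d * (a' * b + a * b') ≤
      c * (max a a' * max b b' + min a a' * min b b') +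
        d * (min a a' * max b b' + max a a' * min b b') := by
  rw [two_point_sum_eq c d a, two_point_sum_eq c d (max a a'), max_add_min, max_add_min]
  gcongr _ + _ * ?_
  exact mul_add_mul_le_max_mul_max_add_min_mul_min a a' b b'

theorem two_point_sum_lt_max_min {c d a a' b b' : α} (hdc : d < c) (ha : a' < a)
    (hb : b < b') :
    c * (a * b + a' * b') + d * (a' * b + a * b') <
      c * (max a a' * max b b' + min a a' * min b b') +
        d * (min a a' * max b b' + max a a' * min b b') := by
  rw [two_point_sum_eq c d a, two_point_sum_eq c d (max a a'), max_add_min, max_add_min]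
  gcongr _ + _ * ?_
  exact mul_add_mul_lt_max_mul_max_add_min_mul_min ha hb

end TwoPointRearrangement

section Reflection

variable {u x y : EuclideanSpace ℝ (Fin (n + 1))}

theorem inner_reflHyp_left (u x y : EuclideanSpace ℝ (Fin (n + 1))) :
    ⟪reflHyp u x, y⟫ = ⟪x, y⟫ - 2 * ⟪x, u⟫ * ⟪u, y⟫ := by
  rw [reflHyp, inner_sub_left, real_inner_smul_left, mul_assoc]

theorem inner_reflHyp_self (hu : ‖u‖ = 1) (x : EuclideanSpace ℝ (Fin (n + 1))) :
    ⟪reflHyp u x, u⟫ = -⟪x, u⟫ := by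
  rw [inner_reflHyp_left, real_inner_self_eq_norm_sq, hu]
  ring

theorem reflHyp_reflHyp (hu : ‖u‖ = 1) (x : EuclideanSpace ℝ (Fin (n + 1))) :
    reflHyp u (reflHyp u x) = x := by
  rw [reflHyp, inner_reflHyp_self hu, reflHyp]
  module

theorem reflHyp_of_inner_eq_zero (h : ⟪x, u⟫ = 0) : reflHyp u x = x := by
  simp [reflHyp, h]

theorem norm_reflHyp (hu : ‖u‖ = 1) (x : EuclideanSpace ℝ (Fin (n + 1))) :
    ‖reflHyp u x‖ = ‖x‖ := by
  have hsq : ‖reflHyp u x‖ ^ 2 = ‖x‖ ^ 2 := by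
    rw [reflHyp, norm_sub_sq_real, norm_smul, real_inner_smul_right, real_inner_comm,
      Real.norm_eq_abs, mul_pow, sq_abs, hu]
    ring
  exact sq_eq_sq₀ (norm_nonneg _) (norm_nonneg _) |>.1 hsq

theorem inner_reflHyp_left_le (hxu : 0 ≤ ⟪x, u⟫) (hyu : 0 ≤ ⟪y, u⟫) :
    ⟪reflHyp u x, y⟫ ≤ ⟪x, y⟫ := by
  rw [inner_reflHyp_left, real_inner_comm y u]
  linarith [mul_nonneg hxu hyu]

theorem inner_reflHyp_left_lt (hxu : 0 < ⟪x, u⟫) (hyu : 0 < ⟪y, u⟫) :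
    ⟪reflHyp u x, y⟫ < ⟪x, y⟫ := by
  rw [inner_reflHyp_left, real_inner_comm y u]
  linarith [mul_pos hxu hyu]

theorem twoPtRearr_of_nonneg (f : EuclideanSpace ℝ (Fin (n + 1)) → ℝ) (hxu : 0 ≤ ⟪x, u⟫) :
    twoPtRearr u f x = max (f x) (f (reflHyp u x)) :=
  if_pos hxu

theorem twoPtRearr_reflHyp_of_nonneg (hu : ‖u‖ = 1) (f : EuclideanSpace ℝ (Fin (n + 1)) → ℝ)
    (hxu : 0 ≤ ⟪x, u⟫) : twoPtRearr u f (reflHyp u x) = min (f x) (f (reflHyp u x)) := by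
  rcases hxu.lt_or_eq with hpos | hzero
  · rw [twoPtRearr, if_neg (by rw [inner_reflHyp_self hu]; linarith), reflHyp_reflHyp hu,
      min_comm]
  · have hfix := reflHyp_of_inner_eq_zero hzero.symm
    rw [hfix, twoPtRearr_of_nonneg f hxu, hfix, max_self, min_self]

end Reflection

theorem stmt_11 (u : EuclideanSpace ℝ (Fin (n + 1))) (hu : ‖u‖ = 1)
    (k : ℝ → ℝ) (hk : MonotoneOn k (Icc (-1 : ℝ) 1))
    (f g : EuclideanSpace ℝ (Fin (n + 1)) → ℝ)
    (x y : EuclideanSpace ℝ (Fin (n + 1)))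
    (hx : x ∈ sphere (0 : EuclideanSpace ℝ (Fin (n + 1))) 1)
    (hy : y ∈ sphere (0 : EuclideanSpace ℝ (Fin (n + 1))) 1)
    (hxu : 0 ≤ ⟪x, u⟫) (hyu : 0 ≤ ⟪y, u⟫) :
    (k ⟪x, y⟫ * (f x * g y + f (reflHyp u x) * g (reflHyp u y)) +
        k ⟪reflHyp u x, y⟫ * (f (reflHyp u x) * g y + f x * g (reflHyp u y)) ≤
      k ⟪x, y⟫ * (twoPtRearr u f x * twoPtRearr u g y +
          twoPtRearr u f (reflHyp u x) * twoPtRearr u g (reflHyp u y)) +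
        k ⟪reflHyp u x, y⟫ * (twoPtRearr u f (reflHyp u x) * twoPtRearr u g y +
          twoPtRearr u f x * twoPtRearr u g (reflHyp u y))) ∧
    (StrictMonoOn k (Icc (-1 : ℝ) 1) → 0 < ⟪x, u⟫ → 0 < ⟪y, u⟫ →
      f (reflHyp u x) < f x → g y < g (reflHyp u y) →
      k ⟪x, y⟫ * (f x * g y + f (reflHyp u x) * g (reflHyp u y)) +
          k ⟪reflHyp u x, y⟫ * (f (reflHyp u x) * g y + f x * g (reflHyp u y)) <
        k ⟪x, y⟫ * (twoPtRearr u f x * twoPtRearr u g y +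
            twoPtRearr u f (reflHyp u x) * twoPtRearr u g (reflHyp u y)) +
          k ⟪reflHyp u x, y⟫ * (twoPtRearr u f (reflHyp u x) * twoPtRearr u g y +
            twoPtRearr u f x * twoPtRearr u g (reflHyp u y))) := by
  rw [mem_sphere_zero_iff_norm] at hx hy
  have hxy : ⟪x, y⟫ ∈ Icc (-1 : ℝ) 1 := real_inner_mem_Icc_of_norm_eq_one hx hy
  have hRxy : ⟪reflHyp u x, y⟫ ∈ Icc (-1 : ℝ) 1 :=
    real_inner_mem_Icc_of_norm_eq_one ((norm_reflHyp hu x).trans hx) hy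
  rw [twoPtRearr_of_nonneg f hxu, twoPtRearr_of_nonneg g hyu,
    twoPtRearr_reflHyp_of_nonneg hu f hxu, twoPtRearr_reflHyp_of_nonneg hu g hyu]
  refine ⟨two_point_sum_le_max_min (hk hRxy hxy (inner_reflHyp_left_le hxu hyu)) _ _ _ _,
    fun hks hxu' hyu' hf hg => ?_⟩
  exact two_point_sum_lt_max_min (hks hRxy hxy (inner_reflHyp_left_lt hxu' hyu')) hf hg
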